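/- arXiv:1002.2260 — 10 statements merged into one kernel-verified Lean document; each statement's English description precedes it below -/
import Mathlib

section
/- Let K be a field of characteristic p > 0 and let E be an elliptic curve over K given by a Weierstrass equation with nonzero discriminant, whose j-invariant j(E) is nonzero and is a p-th power in K (i.e. j(E) = c^p for some c ∈ K). Then there exists an elliptic curve Ẽ over K (a Weierstrass curve over K with nonzero discriminant) such that E is isomorphic over K, via an admissible change of variables, to the curve Ẽ^(p) obtained from Ẽ by raising each Weierstrass coefficient to the p-th power. -/
/-!
Put `E` in the normal form for its characteristic; the hypothesis `j ≠ 0` rules out the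
supersingular normal forms in characteristics `2` and `3`. In characteristic `2` the model
`Y² + XY = X³ + a₂X² + 1/j` becomes a Frobenius image after the substitution `Y ↦ Y + a₂X`,
which replaces `a₂` by `a₂²`. In the other characteristics the remaining freedom is a rescaling
`u`, and a suitable `u` turns both of the remaining coefficients into `p`-th powers.
-/

/-- The Weierstrass curve obtained from `W` by raising each coefficient to the `p`-th power. -/
def WeierstrassCurve.frobeniusImage {K : Type*} [CommRing K] (W : WeierstrassCurve K) (p : ℕ) :
    WeierstrassCurve K :=
  ⟨W.a₁ ^ p, W.a₂ ^ p, W.a₃ ^ p, W.a₄ ^ p, W.a₆ ^ p⟩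

namespace WeierstrassCurve

section CommRing

variable {R : Type*} [CommRing R]

lemma frobeniusImage_eq_map (p : ℕ) [Fact p.Prime] [CharP R p] (W : WeierstrassCurve R) :
    W.frobeniusImage p = W.map (frobenius R p) :=
  rfl

lemma frobeniusImage_Δ (p : ℕ) [Fact p.Prime] [CharP R p] (W : WeierstrassCurve R) :
    (W.frobeniusImage p).Δ = W.Δ ^ p := by
  rw [frobeniusImage_eq_map, map_Δ, frobenius_def]

lemma isUnit_Δ_of_smul_eq_frobeniusImage {p : ℕ} [Fact p.Prime] [CharP R p]
    {E F : WeierstrassCurve R} [E.IsElliptic] {C : VariableChange R}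
    (h : C • E = F.frobeniusImage p) : IsUnit F.Δ := by
  rw [← isUnit_pow_iff (Fact.out : p.Prime).ne_zero, ← frobeniusImage_Δ, ← h]
  exact (C • E).isUnit_Δ

lemma exists_smul_eq_frobeniusImage_of_smul {p : ℕ} {E : WeierstrassCurve R}
    (C₀ : VariableChange R)
    (h : ∃ (F : WeierstrassCurve R) (C : VariableChange R), C • C₀ • E = F.frobeniusImage p) :
    ∃ (F : WeierstrassCurve R) (C : VariableChange R), C • E = F.frobeniusImage p := by
  obtain ⟨F, C, h⟩ := h
  exact ⟨F, C * C₀, by rw [mul_smul, h]⟩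

/-- For `p = 2k + 1`, rescaling by `u = w^(-(k+1))` multiplies `a₄` by `w^(2p) * w²` and `a₆` by
`w^(3p) * w³`. -/
lemma exists_smul_eq_frobeniusImage_of_isShortNF {p : ℕ} (hp : Odd p) (W : WeierstrassCurve R)
    [W.IsShortNF] (w : Rˣ) (α β : R) (hα : w ^ 2 * W.a₄ = α ^ p) (hβ : w ^ 3 * W.a₆ = β ^ p) :
    ∃ C : VariableChange R,
      C • W = (⟨0, 0, 0, w ^ 2 * α, w ^ 3 * β⟩ : WeierstrassCurve R).frobeniusImage p := by
  obtain ⟨k, rfl⟩ := hp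
  refine ⟨⟨(w ^ (k + 1))⁻¹, 0, 0, 0⟩, ?_⟩
  ext <;> simp only [variableChange_a₁, variableChange_a₂, variableChange_a₃, variableChange_a₄,
    variableChange_a₆, a₁_of_isShortNF, a₂_of_isShortNF, a₃_of_isShortNF, inv_inv, frobeniusImage,
    Units.val_pow_eq_pow_val]
  · simp
  · simp
  · simp
  · rw [mul_pow, ← hα]; ring
  · rw [mul_pow, ← hβ]; ring

end CommRing

section Field

variable {K : Type*} [Field K]

lemma exists_smul_eq_frobeniusImage_of_isCharTwoJNeZeroNF [CharP K 2] (W : WeierstrassCurve K)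
    [W.IsElliptic] [W.IsCharTwoJNeZeroNF] {c : K} (hc : W.j = c ^ 2) :
    ∃ (F : WeierstrassCurve K) (C : VariableChange K), C • W = F.frobeniusImage 2 := by
  have ha₆ : W.a₆ = c⁻¹ ^ 2 := by
    rw [inv_pow, ← hc, j_of_isCharTwoJNeZeroNF_of_char_two, one_div, inv_inv]
  refine ⟨⟨1, W.a₂, 0, 0, c⁻¹⟩, ⟨1, 0, W.a₂, 0⟩, ?_⟩
  ext <;> simp only [variableChange_a₁, variableChange_a₂, variableChange_a₃, variableChange_a₄,
    variableChange_a₆, a₁_of_isCharTwoJNeZeroNF, a₃_of_isCharTwoJNeZeroNF,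
    a₄_of_isCharTwoJNeZeroNF, inv_one, Units.val_one, frobeniusImage]
  · linear_combination W.a₂ * CharP.cast_eq_zero K 2
  · linear_combination -W.a₂ ^ 2 * CharP.cast_eq_zero K 2
  · ring
  · ring
  · rw [ha₆]; ring

lemma exists_smul_eq_frobeniusImage_of_isCharThreeJNeZeroNF [CharP K 3] (W : WeierstrassCurve K)
    [W.IsElliptic] [W.IsCharThreeJNeZeroNF] {c : K} (hc : W.j = c ^ 3) :
    ∃ (F : WeierstrassCurve K) (C : VariableChange K), C • W = F.frobeniusImage 3 := by
  have hΔ : -W.a₂ ^ 3 * W.a₆ ≠ 0 :=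
    Δ_of_isCharThreeJNeZeroNF_of_char_three W ▸ W.isUnit_Δ.ne_zero
  have ha₂ : W.a₂ ≠ 0 := by rintro h; simp [h] at hΔ
  have ha₆ : W.a₆ ≠ 0 := right_ne_zero_of_mul hΔ
  have hc₀ : c ≠ 0 := by
    rintro rfl
    exact W.j_ne_zero_of_isCharThreeJNeZeroNF_of_char_three (by simpa using hc)
  have hjc : c ^ 3 * W.a₆ = -W.a₂ ^ 3 := by
    rw [← hc, j_of_isCharThreeJNeZeroNF_of_char_three]; field_simp
  refine ⟨⟨0, W.a₂, 0, 0, -W.a₂ ^ 3 / c⟩, ⟨(Units.mk0 W.a₂ ha₂)⁻¹, 0, 0, 0⟩, ?_⟩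
  ext <;> simp only [variableChange_a₁, variableChange_a₂, variableChange_a₃, variableChange_a₄,
    variableChange_a₆, a₁_of_isCharThreeJNeZeroNF, a₃_of_isCharThreeJNeZeroNF,
    a₄_of_isCharThreeJNeZeroNF, inv_inv, Units.val_mk0, frobeniusImage]
  · ring
  · ring
  · ring
  · ring
  · rw [div_pow, eq_div_iff (pow_ne_zero 3 hc₀)]
    linear_combination W.a₂ ^ 6 * hjc

lemma exists_smul_eq_frobeniusImage_of_isShortNF_of_j_ne_zero {p : ℕ} [Fact p.Prime] [CharP K p]
    (hp2 : p ≠ 2) (hp3 : p ≠ 3) (W : WeierstrassCurve K) [W.IsElliptic] [W.IsShortNF]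
    (hj : W.j ≠ 0) {c : K} (hc : W.j = c ^ p) :
    ∃ (F : WeierstrassCurve K) (C : VariableChange K), C • W = F.frobeniusImage p := by
  have hodd : Odd p := (Fact.out : p.Prime).odd_of_ne_two hp2
  have ha₄ : W.a₄ ≠ 0 := by
    rintro h
    apply hj
    rw [j_of_isShortNF, h]
    simp
  by_cases ha₆ : W.a₆ = 0
  · obtain ⟨k, hk⟩ := hodd
    refine ⟨_, exists_smul_eq_frobeniusImage_of_isShortNF ⟨k, hk⟩ W
      (Units.mk0 (W.a₄ ^ k) (pow_ne_zero _ ha₄)) W.a₄ 0 ?_ ?_⟩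
    · rw [Units.val_mk0, hk]; ring
    · rw [ha₆, zero_pow (Fact.out : p.Prime).ne_zero, mul_zero]
  have h2 : (2 : K) ≠ 0 := by
    exact_mod_cast CharP.cast_ne_zero_of_ne_of_prime K Nat.prime_two hp2
  have h3 : (3 : K) ≠ 0 := by
    exact_mod_cast CharP.cast_ne_zero_of_ne_of_prime K Nat.prime_three hp3
  have hD : 4 * W.a₄ ^ 3 + 27 * W.a₆ ^ 2 ≠ 0 := by
    have := W.isUnit_Δ.ne_zero
    rw [Δ_of_isShortNF] at this
    exact right_ne_zero_of_mul this
  -- `w` twists `W` into the model `y² = x³ - 3j(j - 1728)x - 2j(j - 1728)²`, whose coefficients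
  -- are polynomials in `j = c^p` with prime-field coefficients, hence `p`-th powers.
  set w := -(31104 * W.a₄ * W.a₆ / (4 * W.a₄ ^ 3 + 27 * W.a₆ ^ 2)) with hw
  have hw₀ : w ≠ 0 := by
    have h31104 : (31104 : K) = 2 ^ 7 * 3 ^ 5 := by norm_num
    rw [hw, h31104]
    exact neg_ne_zero.mpr (div_ne_zero (by simp [*]) hD)
  have hwa₄ : w ^ 2 * W.a₄ = -(3 * W.j * (W.j - 1728)) := by
    rw [hw, j_of_isShortNF, div_sub' hD]; field_simp; ring
  have hwa₆ : w ^ 3 * W.a₆ = -(2 * W.j * (W.j - 1728) ^ 2) := by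
    rw [hw, j_of_isShortNF, div_sub' hD]; field_simp; ring
  refine ⟨_, exists_smul_eq_frobeniusImage_of_isShortNF hodd W (Units.mk0 w hw₀)
    (-(3 * c * (c - 1728))) (-(2 * c * (c - 1728) ^ 2)) ?_ ?_⟩
  · rw [Units.val_mk0, hwa₄, hc]; simp [← frobenius_def, map_ofNat]
  · rw [Units.val_mk0, hwa₆, hc]; simp [← frobenius_def, map_ofNat]

end Field

end WeierstrassCurve

open WeierstrassCurve in
/-- If `E` is an elliptic curve over a field `K` of characteristic `p > 0` whose `j`-invariant is
nonzero and a `p`-th power in `K`, then `E` is isomorphic over `K` to `Ẽ⁽ᵖ⁾` for some elliptic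
curve `Ẽ` over `K`. -/
theorem stmt0 {K : Type*} [Field K] (p : ℕ) [CharP K p] (hp : p ≠ 0)
    (E : WeierstrassCurve K) [E.IsElliptic] (hj : E.j ≠ 0) (c : K) (hc : E.j = c ^ p) :
    ∃ E' : WeierstrassCurve K, E'.Δ ≠ 0 ∧
      ∃ C : WeierstrassCurve.VariableChange K,
        C • E = E'.frobeniusImage p := by
  have : Fact p.Prime := ⟨CharP.char_prime_of_ne_zero K hp⟩
  suffices ∃ (F : WeierstrassCurve K) (C : VariableChange K), C • E = F.frobeniusImage p by
    obtain ⟨F, C, h⟩ := this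
    exact ⟨F, (isUnit_Δ_of_smul_eq_frobeniusImage h).ne_zero, C, h⟩
  have hj_smul (C : VariableChange K) : (C • E).j = c ^ p := (E.variableChange_j C).trans hc
  rcases eq_or_ne p 2 with rfl | hp2
  · obtain ⟨C, hC⟩ := E.exists_variableChange_isCharTwoNF
    refine exists_smul_eq_frobeniusImage_of_smul C ?_
    rcases hC
    · exact exists_smul_eq_frobeniusImage_of_isCharTwoJNeZeroNF _ (hj_smul C)
    · exact absurd (C • E).j_of_isCharTwoJEqZeroNF_of_char_two (by rwa [variableChange_j])
  rcases eq_or_ne p 3 with rfl | hp3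
  · obtain ⟨C, hC⟩ := E.exists_variableChange_isCharThreeNF
    refine exists_smul_eq_frobeniusImage_of_smul C ?_
    rcases hC
    · exact exists_smul_eq_frobeniusImage_of_isCharThreeJNeZeroNF _ (hj_smul C)
    · exact absurd (C • E).j_of_isShortNF_of_char_three (by rwa [variableChange_j])
  have : Invertible (2 : K) := invertibleOfNonzero <| by
    exact_mod_cast CharP.cast_ne_zero_of_ne_of_prime K Nat.prime_two hp2
  have : Invertible (3 : K) := invertibleOfNonzero <| by
    exact_mod_cast CharP.cast_ne_zero_of_ne_of_prime K Nat.prime_three hp3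
  obtain ⟨C, hC⟩ := E.exists_variableChange_isShortNF
  exact exists_smul_eq_frobeniusImage_of_smul C
    (exists_smul_eq_frobeniusImage_of_isShortNF_of_j_ne_zero hp2 hp3 _
      (by rwa [variableChange_j]) (hj_smul C))
end

section
/- Let K be a field of characteristic p > 0 and let E be an elliptic curve over K (a Weierstrass curve with nonzero discriminant) with j-invariant j(E) = 0. Then there exists an elliptic curve Ẽ over K such that E is isomorphic over K, via an admissible change of variables, to the curve Ẽ^(p) obtained from Ẽ by raising each Weierstrass coefficient to the p-th power. -/
lemma Nat.Prime.exists_sq_eq_six_mul_add_one {p : ℕ} (hp : p.Prime) (h2 : p ≠ 2) (h3 : p ≠ 3) :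
    ∃ k, p ^ 2 = 6 * k + 1 := by
  have hp2 : p % 2 = 1 := Nat.odd_iff.mp (hp.odd_of_ne_two h2)
  have hp3 : p % 3 ≠ 0 := fun h ↦
    h3 ((Nat.prime_dvd_prime_iff_eq Nat.prime_three hp).mp (Nat.dvd_of_mod_eq_zero h)).symm
  have hsq : p ^ 2 % 6 = 1 := by
    rcases (by omega : p % 6 = 1 ∨ p % 6 = 5) with h | h <;> simp [Nat.pow_mod, h]
  exact ⟨p ^ 2 / 6, by omega⟩

namespace WeierstrassCurve

section FrobeniusImage

variable {R : Type*} [CommRing R] (W : WeierstrassCurve R)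

lemma frobeniusImage_frobeniusImage (m n : ℕ) :
    (W.frobeniusImage m).frobeniusImage n = W.frobeniusImage (m * n) := by
  ext <;> exact (pow_mul _ _ _).symm

variable (p : ℕ) [ExpChar R p] (n : ℕ)

lemma frobeniusImage_eq_map_s1 : W.frobeniusImage (p ^ n) = W.map (iterateFrobenius R p n) := rfl

lemma frobeniusImage_Δ_s1 : (W.frobeniusImage (p ^ n)).Δ = W.Δ ^ p ^ n := by
  rw [frobeniusImage_eq_map_s1, map_Δ, iterateFrobenius_def]

lemma exists_variableChange_eq_frobeniusImage_of_smul {W : WeierstrassCurve R}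
    (C : VariableChange R)
    (h : ∃ D : VariableChange R, D • C • W = (C • W).frobeniusImage (p ^ n)) :
    ∃ D : VariableChange R, D • W = W.frobeniusImage (p ^ n) := by
  obtain ⟨D, hD⟩ := h
  refine ⟨(C.map (iterateFrobenius R p n))⁻¹ * D * C, ?_⟩
  rw [mul_smul, mul_smul, hD, frobeniusImage_eq_map_s1, ← map_variableChange, inv_smul_smul,
    frobeniusImage_eq_map_s1]

end FrobeniusImage

variable {F : Type*} [Field F] (W : WeierstrassCurve F) [W.IsElliptic]

lemma exists_variableChange_eq_frobeniusImage_of_char_two [CharP F 2] [W.IsCharTwoJEqZeroNF] :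
    ∃ C : VariableChange F, C • W = W.frobeniusImage (2 ^ 2) := by
  have hc : W.a₃ ≠ 0 := by
    have hΔ := W.isUnit_Δ.ne_zero
    rwa [Δ_of_isCharTwoJEqZeroNF_of_char_two, pow_ne_zero_iff four_ne_zero] at hΔ
  have h2 : (2 : F) = 0 := CharP.cast_eq_zero F 2
  set a := W.a₄
  set b := W.a₆
  set c := W.a₃
  -- With `u = c⁻¹` and `r = s²`, the `a₄`- and `a₆`-equations become the Artin–Schreier equations
  -- `s⁴ + cs = (a/c)⁴ - a` and `t² + ct = …`, which have the solutions below in `F`.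
  refine ⟨⟨(Units.mk0 c hc)⁻¹, a ^ 2 / c ^ 2, a / c, (b ^ 2 + a ^ 3) / c ^ 3 + b / c⟩, ?_⟩
  ext <;> simp only [variableChange_a₁, variableChange_a₂, variableChange_a₃, variableChange_a₄,
    variableChange_a₆, inv_inv, Units.val_mk0, frobeniusImage, a₁_of_isCharTwoJEqZeroNF,
    a₂_of_isCharTwoJEqZeroNF] <;> field_simp
  · linear_combination a * h2
  · linear_combination a ^ 2 * h2
  · linear_combination (c ^ 2 * b + a ^ 3 + b ^ 2) * h2
  · linear_combination (-(c ^ 2 * a * b) - a * b ^ 2) * h2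
  · linear_combination (-(c ^ 2 * b * a ^ 3) - c ^ 2 * b ^ 3 - c ^ 4 * b ^ 2 - b ^ 2 * a ^ 3
        - b ^ 4) * h2

lemma exists_variableChange_eq_frobeniusImage_of_char_three [CharP F 3] [W.IsShortNF] :
    ∃ C : VariableChange F, C • W = W.frobeniusImage (3 ^ 2) := by
  have ha : W.a₄ ≠ 0 := by
    have hΔ := W.isUnit_Δ.ne_zero
    rwa [Δ_of_isShortNF_of_char_three, neg_ne_zero, pow_ne_zero_iff three_ne_zero] at hΔ
  have h3 : (3 : F) = 0 := CharP.cast_eq_zero F 3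
  -- With `u = a₄⁻²`, `r` has to solve `r³ + a₄r = a₆⁹/a₄¹² - a₆`.
  refine ⟨⟨(Units.mk0 (W.a₄ ^ 2) (pow_ne_zero 2 ha))⁻¹, W.a₆ ^ 3 / W.a₄ ^ 4 - W.a₆ / W.a₄, 0, 0⟩,
    ?_⟩
  ext <;> simp only [variableChange_a₁, variableChange_a₂, variableChange_a₃, variableChange_a₄,
    variableChange_a₆, inv_inv, Units.val_mk0, frobeniusImage, a₁_of_isShortNF,
    a₂_of_isShortNF, a₃_of_isShortNF, zero_pow (by norm_num : 3 ^ 2 ≠ 0)] <;> field_simp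
  · ring
  · linear_combination W.a₆ * (W.a₆ ^ 2 - W.a₄ ^ 3) * h3
  · ring
  · linear_combination W.a₆ ^ 2 * (W.a₆ ^ 2 - W.a₄ ^ 3) ^ 2 * h3
  · linear_combination W.a₆ ^ 5 * W.a₄ ^ 3 * (W.a₄ ^ 3 - W.a₆ ^ 2) * h3

lemma exists_variableChange_eq_frobeniusImage_of_a₄_eq_zero [W.IsShortNF] (ha₄ : W.a₄ = 0)
    {q k : ℕ} (hq : q = 6 * k + 1) :
    ∃ C : VariableChange F, C • W = W.frobeniusImage q := by
  have hb : W.a₆ ≠ 0 := by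
    have hΔ := W.isUnit_Δ.ne_zero
    rw [Δ_of_isShortNF, ha₄] at hΔ
    rintro hb
    simp [hb] at hΔ
  refine ⟨⟨(Units.mk0 (W.a₆ ^ k) (pow_ne_zero k hb))⁻¹, 0, 0, 0⟩, ?_⟩
  subst hq
  ext <;> simp only [variableChange_a₁, variableChange_a₂, variableChange_a₃, variableChange_a₄,
    variableChange_a₆, inv_inv, Units.val_mk0, frobeniusImage, a₁_of_isShortNF,
    a₂_of_isShortNF, a₃_of_isShortNF, ha₄] <;> ring

lemma a₄_eq_zero_of_j_eq_zero [W.IsShortNF] (h2 : (2 : F) ≠ 0) (h3 : (3 : F) ≠ 0)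
    (hj : W.j = 0) : W.a₄ = 0 := by
  rw [j_eq_zero_iff, c₄_of_isShortNF] at hj
  have h48 : (-48 : F) ≠ 0 := by
    rw [show (-48 : F) = -(2 ^ 4 * 3) by norm_num]
    exact neg_ne_zero.mpr (mul_ne_zero (pow_ne_zero 4 h2) h3)
  exact (mul_eq_zero.mp hj).resolve_left h48

theorem exists_variableChange_eq_frobeniusImage_sq_of_j_eq_zero (p : ℕ) [Fact p.Prime] [CharP F p]
    (hj : W.j = 0) : ∃ C : VariableChange F, C • W = W.frobeniusImage (p ^ 2) := by
  obtain ⟨C, hC⟩ : ∃ C : VariableChange F,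
      ∃ D : VariableChange F, D • C • W = (C • W).frobeniusImage (p ^ 2) := by
    obtain rfl | h2 := eq_or_ne p 2
    · have := W.toCharTwoJEqZeroNF_spec (W.j_eq_zero_iff_of_char_two.mp hj)
      exact ⟨_, exists_variableChange_eq_frobeniusImage_of_char_two (W.toCharTwoJEqZeroNF • W)⟩
    obtain rfl | h3 := eq_or_ne p 3
    · have := W.toShortNFOfCharThree_spec (W.j_eq_zero_iff_of_char_three.mp hj)
      exact ⟨_, exists_variableChange_eq_frobeniusImage_of_char_three (W.toShortNFOfCharThree • W)⟩
    have h2' : (2 : F) ≠ 0 := CharP.cast_ne_zero_of_ne_of_prime F Nat.prime_two h2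
    have h3' : (3 : F) ≠ 0 := CharP.cast_ne_zero_of_ne_of_prime F Nat.prime_three h3
    let : Invertible (2 : F) := invertibleOfNonzero h2'
    let : Invertible (3 : F) := invertibleOfNonzero h3'
    have ha₄ := (W.toShortNF • W).a₄_eq_zero_of_j_eq_zero h2' h3' ((variableChange_j _ _).trans hj)
    obtain ⟨k, hk⟩ := Nat.Prime.exists_sq_eq_six_mul_add_one Fact.out h2 h3
    exact ⟨_, exists_variableChange_eq_frobeniusImage_of_a₄_eq_zero _ ha₄ hk⟩
  exact exists_variableChange_eq_frobeniusImage_of_smul p 2 C hC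

end WeierstrassCurve

/-- If `E` is an elliptic curve over a field `K` of characteristic `p > 0` with `j`-invariant `0`,
then `E` is isomorphic over `K` to `Ẽ⁽ᵖ⁾` for some elliptic curve `Ẽ` over `K`. -/
theorem stmt1 {K : Type*} [Field K] (p : ℕ) [CharP K p] (hp : p ≠ 0)
    (E : WeierstrassCurve K) [E.IsElliptic] (hj : E.j = 0) :
    ∃ E' : WeierstrassCurve K, E'.Δ ≠ 0 ∧
      ∃ C : WeierstrassCurve.VariableChange K,
        C • E = E'.frobeniusImage p := by
  have := Fact.mk ((CharP.char_is_prime_or_zero K p).resolve_right hp)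
  obtain ⟨C, hC⟩ := E.exists_variableChange_eq_frobeniusImage_sq_of_j_eq_zero p hj
  refine ⟨E.frobeniusImage p, ?_, C, ?_⟩
  · rw [← pow_one p, WeierstrassCurve.frobeniusImage_Δ_s1]
    exact pow_ne_zero _ E.isUnit_Δ.ne_zero
  · rwa [WeierstrassCurve.frobeniusImage_frobeniusImage, ← sq]
end

section
/- Let k be a perfect field of characteristic 2, let a₂, a₆ ∈ k with a₆ ≠ 0, and let W be the elliptic curve over k given by Y² + XY = X³ + a₂X² + a₆. Then W has a k-rational point of order 4 if and only if there exists b ∈ k with a₂ = b² + b. -/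
/-!
In characteristic 2, `-(x, y) = (x, y + x)` on `Y² + XY = X³ + a₂X² + a₆`, so the only point of
order 2 is the one with `x = 0`. Doubling `P = (x, y)`, `x ≠ 0`, along the tangent of slope `ℓ`
gives a point with `x`-coordinate `ℓ² + ℓ + a₂`; hence `P` has order 4 exactly when
`a₂ = ℓ² + ℓ`. Conversely, if `a₂ = b² + b`, let `x` be the fourth root of `a₆` (the field is
perfect): the point `(x, bx + x²)` lies on the curve and its tangent has slope `b`.
-/

open WeierstrassCurve WeierstrassCurve.Affine WeierstrassCurve.Affine.Point

theorem addOrderOf_eq_four_iff {G : Type*} [AddMonoid G] {P : G} :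
    addOrderOf P = 4 ↔ 2 • P ≠ 0 ∧ 2 • 2 • P = 0 := by
  have : Fact (Nat.Prime 2) := ⟨Nat.prime_two⟩
  rw [← mul_nsmul', show 2 * 2 = 4 from rfl]
  constructor
  · intro hP
    refine ⟨fun h => ?_, hP ▸ addOrderOf_nsmul_eq_zero P⟩
    have := addOrderOf_dvd_of_nsmul_eq_zero h
    rw [hP] at this
    norm_num at this
  · rintro ⟨h2, h4⟩
    exact addOrderOf_eq_prime_pow (p := 2) (n := 1) (by simpa using h2) (by simpa using h4)

namespace WeierstrassCurve.Affine.Point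

variable {F : Type*} [Field F] [DecidableEq F] {W : WeierstrassCurve.Affine F}

theorem two_nsmul_some_eq_zero_iff {x y : F} (h : W.Nonsingular x y) :
    2 • some x y h = 0 ↔ y = W.negY x y := by
  rw [two_nsmul]
  by_cases hy : y = W.negY x y
  · exact iff_of_true (add_self_of_Y_eq hy) hy
  · simp only [add_self_of_Y_ne hy, hy, some_ne_zero]

end WeierstrassCurve.Affine.Point

namespace WeierstrassCurve

variable {k : Type*} [Field k] [CharP k 2] {W : WeierstrassCurve k} [W.IsCharTwoJNeZeroNF]

theorem eq_negY_iff_of_isCharTwoJNeZeroNF {x y : k} : y = W.toAffine.negY x y ↔ x = 0 := by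
  have h2 : (2 : k) = 0 := CharTwo.two_eq_zero
  rw [negY, a₁_of_isCharTwoJNeZeroNF, a₃_of_isCharTwoJNeZeroNF]
  constructor
  · intro h
    linear_combination h - y * h2
  · intro h
    linear_combination h + y * h2

theorem addX_self_of_isCharTwoJNeZeroNF (x ℓ : k) :
    W.toAffine.addX x x ℓ = ℓ ^ 2 + ℓ + W.a₂ := by
  have h2 : (2 : k) = 0 := CharTwo.two_eq_zero
  rw [addX, a₁_of_isCharTwoJNeZeroNF]
  linear_combination (-x - W.a₂) * h2

theorem slope_self_of_isCharTwoJNeZeroNF [DecidableEq k] {x y : k} (hx : x ≠ 0) :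
    W.toAffine.slope x x y y = (x ^ 2 + y) / x := by
  have h2 : (2 : k) = 0 := CharTwo.two_eq_zero
  rw [slope_of_Y_ne rfl (mt eq_negY_iff_of_isCharTwoJNeZeroNF.mp hx), negY,
    a₁_of_isCharTwoJNeZeroNF, a₃_of_isCharTwoJNeZeroNF, a₄_of_isCharTwoJNeZeroNF]
  congr 1
  · linear_combination (x ^ 2 + W.a₂ * x - y) * h2
  · linear_combination y * h2

theorem addOrderOf_some_eq_four_iff_of_isCharTwoJNeZeroNF [DecidableEq k] {x y : k}
    (h : W.toAffine.Nonsingular x y) :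
    addOrderOf (some x y h) = 4 ↔
      x ≠ 0 ∧ W.a₂ = W.toAffine.slope x x y y ^ 2 + W.toAffine.slope x x y y := by
  rw [addOrderOf_eq_four_iff, ne_eq, two_nsmul_some_eq_zero_iff,
    eq_negY_iff_of_isCharTwoJNeZeroNF]
  refine and_congr_right fun hx => ?_
  rw [two_nsmul (some x y h), add_self_of_Y_ne (mt eq_negY_iff_of_isCharTwoJNeZeroNF.mp hx),
    two_nsmul_some_eq_zero_iff, eq_negY_iff_of_isCharTwoJNeZeroNF,
    addX_self_of_isCharTwoJNeZeroNF, CharTwo.add_eq_zero, eq_comm]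

theorem nonsingular_of_isCharTwoJNeZeroNF {b x : k} (hb : W.a₂ = b ^ 2 + b)
    (hx : x ^ 4 = W.a₆) (ha₆ : W.a₆ ≠ 0) : W.toAffine.Nonsingular x (b * x + x ^ 2) := by
  have h2 : (2 : k) = 0 := CharTwo.two_eq_zero
  rw [← equation_iff_nonsingular_of_Δ_ne_zero (by rwa [Δ_of_isCharTwoJNeZeroNF_of_char_two]),
    equation_iff, a₁_of_isCharTwoJNeZeroNF, a₃_of_isCharTwoJNeZeroNF, a₄_of_isCharTwoJNeZeroNF]
  linear_combination -x ^ 2 * hb + hx + b * x ^ 3 * h2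

end WeierstrassCurve

open Classical in
/-- Over a perfect field `k` of characteristic `2`, the elliptic curve
`Y² + XY = X³ + a₂X² + a₆` (with `a₆ ≠ 0`) has a `k`-rational point of order `4` if and only if
`a₂ = b² + b` for some `b ∈ k`. -/
theorem stmt5 {k : Type*} [Field k] [CharP k 2] [PerfectField k]
    (a₂ a₆ : k) (ha₆ : a₆ ≠ 0) :
    (∃ P : (WeierstrassCurve.mk 1 a₂ 0 0 a₆ : WeierstrassCurve k).toAffine.Point,
        addOrderOf P = 4) ↔
      ∃ b : k, a₂ = b ^ 2 + b := by
  have : (WeierstrassCurve.mk 1 a₂ 0 0 a₆ : WeierstrassCurve k).IsCharTwoJNeZeroNF :=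
    ⟨rfl, rfl, rfl⟩
  constructor
  · rintro ⟨_ | ⟨x, y, h⟩, hP⟩
    · simp [← zero_def] at hP
    exact ⟨_, ((addOrderOf_some_eq_four_iff_of_isCharTwoJNeZeroNF h).mp hP).2⟩
  · rintro ⟨b, hb⟩
    obtain ⟨x, hx⟩ := (bijective_iterateFrobenius k 2 2).surjective a₆
    replace hx : x ^ 4 = a₆ := hx
    have hx₀ : x ≠ 0 := by
      rintro rfl
      exact ha₆ (by simpa using hx.symm)
    refine ⟨_, (addOrderOf_some_eq_four_iff_of_isCharTwoJNeZeroNF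
      (nonsingular_of_isCharTwoJNeZeroNF hb hx ha₆)).mpr ⟨hx₀, ?_⟩⟩
    have hℓ : (x ^ 2 + (b * x + x ^ 2)) / x = b := by
      rw [add_left_comm, CharTwo.add_self_eq_zero, add_zero, mul_div_cancel_right₀ _ hx₀]
    rwa [slope_self_of_isCharTwoJNeZeroNF hx₀, hℓ]
end

section
/- Let k be a field of characteristic 2, let a₂, a₆ ∈ k with a₆ ≠ 0, and suppose t, b ∈ k satisfy t⁴ = a₆ and b² + b = a₂. Then the affine point (t, t² + bt) on the elliptic curve Y² + XY = X³ + a₂X² + a₆ over k is a k-rational point of order 4. -/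
/-!
In characteristic `2`, on a curve with `a₁ = 1` and `a₃ = a₄ = 0`, negation is
`(x, y) ↦ (x, y + x)`, so the points of order `2` are those with `x = 0`, and the tangent
construction gives `x(2P) = (x⁴ + a₆) / x²`. Hence `x(P)⁴ = a₆` forces `2P` to have order `2`, i.e.
`P` has order `4`. The discriminant of such a curve is `a₆`, so `(t, t² + bt)` is nonsingular as
soon as it lies on the curve, which is a direct computation from `t⁴ = a₆` and `b² + b = a₂`.
-/

open WeierstrassCurve.Affine WeierstrassCurve.Affine.Point

namespace WeierstrassCurve

variable {F : Type*} [Field F] [CharP F 2] {W : WeierstrassCurve F}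

lemma Δ_eq_a₆_of_charTwo (ha₁ : W.a₁ = 1) (ha₃ : W.a₃ = 0) (ha₄ : W.a₄ = 0) : W.Δ = W.a₆ := by
  simp only [Δ, b₂, b₄, b₆, b₈, ha₁, ha₃, ha₄]
  grind

namespace Affine

variable {W : Affine F} {x y : F}

lemma Y_eq_negY_iff_of_charTwo (ha₁ : W.a₁ = 1) (ha₃ : W.a₃ = 0) : y = W.negY x y ↔ x = 0 := by
  rw [negY, ha₁, ha₃, one_mul, sub_zero, sub_eq_add_neg, CharTwo.neg_eq, CharTwo.neg_eq,
    left_eq_add]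

variable [DecidableEq F]

lemma addX_slope_self_of_charTwo (ha₁ : W.a₁ = 1) (ha₃ : W.a₃ = 0) (ha₄ : W.a₄ = 0)
    (h : W.Equation x y) (hx : x ≠ 0) :
    W.addX x x (W.slope x x y y) = (x ^ 4 + W.a₆) / x ^ 2 := by
  have hden : y - W.negY x y = x := by
    rw [negY, ha₁, ha₃]; grind
  rw [slope_of_Y_ne rfl (mt (Y_eq_negY_iff_of_charTwo ha₁ ha₃).mp hx), hden, addX]
  rw [equation_iff] at h
  simp only [ha₁, ha₃, ha₄] at h ⊢
  field_simp
  grind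

lemma addOrderOf_some_eq_four_of_charTwo (ha₁ : W.a₁ = 1) (ha₃ : W.a₃ = 0) (ha₄ : W.a₄ = 0)
    (h : W.Nonsingular x y) (hx : x ≠ 0) (hx₄ : x ^ 4 = W.a₆) : addOrderOf (some _ _ h) = 4 := by
  have hy : y ≠ W.negY x y := mt (Y_eq_negY_iff_of_charTwo ha₁ ha₃).mp hx
  have hX₂ : W.addX x x (W.slope x x y y) = 0 := by
    rw [addX_slope_self_of_charTwo ha₁ ha₃ ha₄ h.1 hx, hx₄, CharTwo.add_self_eq_zero, zero_div]
  have hQ := nonsingular_add h h fun hxy => hy hxy.2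
  have h₂ : some _ _ h + some _ _ h = some _ _ hQ := add_self_of_Y_ne hy
  have h₄ : some _ _ hQ + some _ _ hQ = 0 :=
    add_self_of_Y_eq ((Y_eq_negY_iff_of_charTwo ha₁ ha₃).mpr hX₂)
  have := Fact.mk Nat.prime_two
  refine addOrderOf_eq_prime_pow (p := 2) (n := 1) ?_ ?_
  · rw [pow_one, two_nsmul, h₂]
    exact some_ne_zero _
  · rw [show 2 ^ (1 + 1) = 2 + 2 from rfl, add_nsmul, two_nsmul, h₂, h₄]

end Affine
end WeierstrassCurve

open Classical in
/-- Over a field `k` of characteristic `2`, if `t⁴ = a₆ ≠ 0` and `b² + b = a₂`, then the point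
`(t, t² + bt)` on the elliptic curve `Y² + XY = X³ + a₂X² + a₆` is a `k`-rational point of
order `4`. -/
theorem stmt6 {k : Type*} [Field k] [CharP k 2] (a₂ a₆ t b : k) (ha₆ : a₆ ≠ 0)
    (ht : t ^ 4 = a₆) (hb : b ^ 2 + b = a₂) :
    ∃ h : (WeierstrassCurve.mk 1 a₂ 0 0 a₆ : WeierstrassCurve k).toAffine.Nonsingular t
        (t ^ 2 + b * t),
      addOrderOf (WeierstrassCurve.Affine.Point.some _ _ h) = 4 := by
  have ht₀ : t ≠ 0 := by
    rintro rfl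
    exact ha₆ (by rw [← ht, zero_pow four_ne_zero])
  have hΔ : (WeierstrassCurve.mk 1 a₂ 0 0 a₆).Δ ≠ 0 := by
    rwa [WeierstrassCurve.Δ_eq_a₆_of_charTwo rfl rfl rfl]
  have heq : (WeierstrassCurve.mk 1 a₂ 0 0 a₆).toAffine.Equation t (t ^ 2 + b * t) := by
    rw [equation_iff]
    grind
  have h := (equation_iff_nonsingular_of_Δ_ne_zero hΔ).mp heq
  exact ⟨h, addOrderOf_some_eq_four_of_charTwo rfl rfl rfl h ht₀ ht⟩
end

section
/- Let k be a field of characteristic 3 and let δ ∈ k with δ ≠ 0. Then the affine point (δ, δ) on the elliptic curve Y² = X³ + X² − δ³ over k is a k-rational point of order 3. -/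
/-!
The tangent to `Y² = X³ + X² - δ³` at `P = (δ, δ)` has slope `(3δ² + 2δ) / (2δ) = 1` in
characteristic `3`, so its third intersection with the curve has `X = 1² - 1 - 2δ = δ`: the tangent
meets the curve only at `P`, i.e. `P` is a flex. Hence `2P = -P`, and `P ≠ 0` has order `3`.
-/

theorem addOrderOf_eq_three_of_add_self_eq_neg {G : Type*} [AddGroup G] {P : G}
    (h : P + P = -P) (hP : P ≠ 0) : addOrderOf P = 3 :=
  addOrderOf_eq_prime (by rw [succ_nsmul, two_nsmul, h, neg_add_cancel]) hP

namespace WeierstrassCurve.Affine.Point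

variable {F : Type*} [Field F] [DecidableEq F] {W : WeierstrassCurve.Affine F}

theorem add_self_eq_neg_of_addX_eq {x y : F} {h : W.Nonsingular x y} (hy : y ≠ W.negY x y)
    (hx : W.addX x x (W.slope x x y y) = x) : some _ _ h + some _ _ h = -some _ _ h := by
  rw [add_self_of_Y_ne' hy]
  congr 1
  simp only [negAddY, hx, sub_self, mul_zero, zero_add]

theorem addOrderOf_eq_three_of_addX_eq {x y : F} {h : W.Nonsingular x y} (hy : y ≠ W.negY x y)
    (hx : W.addX x x (W.slope x x y y) = x) : addOrderOf (some _ _ h) = 3 :=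
  addOrderOf_eq_three_of_add_self_eq_neg (add_self_eq_neg_of_addX_eq hy hx) (some_ne_zero h)

end WeierstrassCurve.Affine.Point

section CharThree

open WeierstrassCurve.Affine

variable {k : Type*} [Field k] [CharP k 3] {δ : k}

theorem two_mul_ne_zero_of_charP_three (hδ : δ ≠ 0) : 2 * δ ≠ 0 :=
  mul_ne_zero (Ring.two_ne_zero (by rw [ringChar.eq k 3]; decide)) hδ

theorem Y_ne_negY_of_charP_three (hδ : δ ≠ 0) :
    δ ≠ (WeierstrassCurve.mk 0 1 0 0 (-δ ^ 3) : WeierstrassCurve k).toAffine.negY δ δ := by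
  simp only [negY]
  intro h
  exact two_mul_ne_zero_of_charP_three hδ (by linear_combination h)

theorem nonsingular_of_charP_three (hδ : δ ≠ 0) :
    (WeierstrassCurve.mk 0 1 0 0 (-δ ^ 3) : WeierstrassCurve k).toAffine.Nonsingular δ δ := by
  rw [nonsingular_iff, equation_iff]
  exact ⟨by ring, Or.inr (Y_ne_negY_of_charP_three hδ)⟩

theorem addX_slope_of_charP_three [DecidableEq k] (hδ : δ ≠ 0) :
    (WeierstrassCurve.mk 0 1 0 0 (-δ ^ 3) : WeierstrassCurve k).toAffine.addX δ δ
      ((WeierstrassCurve.mk 0 1 0 0 (-δ ^ 3) : WeierstrassCurve k).toAffine.slope δ δ δ δ) = δ := by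
  have h3 : (3 : k) = 0 := CharP.cast_eq_zero k 3
  have hslope : (WeierstrassCurve.mk 0 1 0 0 (-δ ^ 3) : WeierstrassCurve k).toAffine.slope
      δ δ δ δ = 1 := by
    rw [slope_of_Y_ne rfl (Y_ne_negY_of_charP_three hδ), div_eq_one_iff_eq]
    · simp only [negY]
      linear_combination δ ^ 2 * h3
    · simpa [negY, sub_neg_eq_add, ← two_mul] using two_mul_ne_zero_of_charP_three hδ
  rw [hslope]
  simp only [addX]
  linear_combination -δ * h3

end CharThree

open Classical in
/-- Over a field `k` of characteristic `3` with `δ ≠ 0`, the point `(δ, δ)` on the elliptic curve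
`Y² = X³ + X² - δ³` is a `k`-rational point of order `3`. -/
theorem stmt8 {k : Type*} [Field k] [CharP k 3] (δ : k) (hδ : δ ≠ 0) :
    ∃ h : (WeierstrassCurve.mk 0 1 0 0 (-δ ^ 3) : WeierstrassCurve k).toAffine.Nonsingular δ δ,
      addOrderOf (WeierstrassCurve.Affine.Point.some _ _ h) = 3 :=
  ⟨nonsingular_of_charP_three hδ, WeierstrassCurve.Affine.Point.addOrderOf_eq_three_of_addX_eq
    (Y_ne_negY_of_charP_three hδ) (addX_slope_of_charP_three hδ)⟩
end

section
/- Let k be a perfect field of characteristic 3, let a₆ ∈ k with a₆ ≠ 0, and let W be the elliptic curve over k given by Y² = X³ + X² + a₆. Then W has a k-rational point of order 9 if and only if there exists u ∈ k with a₆ = u³ − u. -/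
/-!
In characteristic 3 the multiplication-by-3 map of `Y² = X³ + X² + a₆` has x-coordinate
`x ↦ (x⁹ - a₆x³ + a₆³) / (x³ + a₆)²`, so the nonzero 3-torsion points are exactly the points
with `x³ = -a₆`. If `P` has order 9, then `ξ = x(3P)` satisfies `ξ³ = -a₆` and `t = x(P)³` is a
root of the cubic `ξ (t + a₆)² = t³ - a₆ t + a₆³`; a Tschirnhaus transformation of this cubic
yields a root `u` of `u³ - u = a₆`. Conversely, since `k` is perfect we may write
`a₆ = (v³ - v)⁹`, and the point with `x = v² + v⁵ - v⁶ - v⁹` has `x(3P) = -(v³ - v)³`, so `3P` is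
a nonzero 3-torsion point.
-/

open WeierstrassCurve WeierstrassCurve.Affine

lemma exists_eq_cube_sub_self {k : Type*} [Field k] [CharP k 3] {a ξ t : k} (hξ : ξ ≠ 0)
    (hξa : ξ ^ 3 = -a) (ht : ξ * (t + a) ^ 2 = t ^ 3 - a * t + a ^ 3) :
    ∃ u : k, a = u ^ 3 - u := by
  refine ⟨(-t ^ 2 + t * (ξ + ξ ^ 2 - ξ ^ 3) - ξ ^ 5 - ξ ^ 6) / ξ ^ 3, ?_⟩
  obtain rfl : a = -ξ ^ 3 := by rw [hξa, neg_neg]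
  field_simp
  linear_combination (norm := ring_nf)
    -(ξ ^ 4 - ξ ^ 5 - ξ ^ 6 + ξ ^ 7 - ξ ^ 9 + t * ξ ^ 2 - t * ξ ^ 3 + t * ξ ^ 4 + t ^ 2 * ξ + t ^ 3)
      * ht
  reduce_mod_char!

namespace CharThreeCurve

variable {k : Type*} [Field k]

abbrev W (a₆ : k) : Affine k := (WeierstrassCurve.mk 0 1 0 0 a₆ : WeierstrassCurve k).toAffine

variable {a₆ : k}

lemma equation_W_iff {x y : k} : (W a₆).Equation x y ↔ y ^ 2 = x ^ 3 + x ^ 2 + a₆ := by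
  rw [equation_iff]
  constructor <;> intro h <;> linear_combination h

lemma negY_W (x y : k) : (W a₆).negY x y = -y := by
  simp [negY]

lemma addX_W (x₁ x₂ ℓ : k) : (W a₆).addX x₁ x₂ ℓ = ℓ ^ 2 - 1 - x₁ - x₂ := by
  simp [addX]

lemma addY_W (x₁ x₂ y₁ ℓ : k) :
    (W a₆).addY x₁ x₂ y₁ ℓ = -(ℓ * ((W a₆).addX x₁ x₂ ℓ - x₁) + y₁) := by
  rw [addY, negY_W, negAddY]

variable [CharP k 3]

lemma Y_ne_negY_W {x y : k} (hy : y ≠ 0) : y ≠ (W a₆).negY x y := by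
  rw [negY_W]
  intro h
  exact hy (by linear_combination -h + y * CharP.cast_eq_zero k 3)

lemma nonsingular_W_of_Y_ne_zero {x y : k} (h : y ^ 2 = x ^ 3 + x ^ 2 + a₆) (hy : y ≠ 0) :
    (W a₆).Nonsingular x y := by
  rw [nonsingular_iff']
  refine ⟨equation_W_iff.2 h, Or.inr fun hY => hy ?_⟩
  linear_combination -hY + y * CharP.cast_eq_zero k 3

variable [DecidableEq k]

lemma slope_W_self {x y : k} (hy : y ≠ 0) : (W a₆).slope x x y y = x / y := by
  rw [slope_of_Y_ne rfl (Y_ne_negY_W hy), negY_W, div_eq_div_iff _ hy]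
  · simp only [mul_one, add_zero, zero_mul, sub_zero, sub_neg_eq_add]
    linear_combination x ^ 2 * y * CharP.cast_eq_zero k 3
  · exact fun h => hy (by linear_combination -h + y * CharP.cast_eq_zero k 3)

lemma addX_W_self_sub {x y : k} (h : (W a₆).Equation x y) (hy : y ≠ 0) :
    (W a₆).addX x x ((W a₆).slope x x y y) - x = -(x ^ 3 + a₆) / y ^ 2 := by
  rw [addX_W, slope_W_self hy]
  field_simp
  linear_combination -equation_W_iff.1 h - x * y ^ 2 * CharP.cast_eq_zero k 3

lemma three_nsmul_some_eq_zero_iff {x y : k} (h : (W a₆).Nonsingular x y) :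
    3 • Point.some _ _ h = 0 ↔ x ^ 3 + a₆ = 0 := by
  rw [three_nsmul, add_eq_zero_iff_neg_eq]
  rcases eq_or_ne y 0 with rfl | hy
  · rw [Point.add_self_of_Y_eq (by rw [negY_W, neg_zero])]
    refine iff_of_false (neg_ne_zero.2 (Point.some_ne_zero h)) fun hψ => ?_
    obtain rfl : x = 0 := pow_eq_zero_iff (n := 2) two_ne_zero |>.1 <| by
      linear_combination -equation_W_iff.1 h.1 - hψ
    simp [nonsingular_zero] at h
  · rw [Point.add_self_of_Y_ne (Y_ne_negY_W hy), Point.neg_some, Point.some.injEq, addY_W,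
      negY_W]
    have hdbl := addX_W_self_sub h.1 hy
    constructor
    · rintro ⟨hx, -⟩
      rw [← hx, sub_self, eq_comm, neg_div, neg_eq_zero, div_eq_zero_iff] at hdbl
      exact hdbl.resolve_right (pow_ne_zero 2 hy)
    · intro hψ
      rw [hψ, neg_zero, zero_div, sub_eq_zero] at hdbl
      rw [hdbl, sub_self, mul_zero, zero_add]
      exact ⟨rfl, rfl⟩

lemma exists_three_nsmul_some_eq {x y : k} (h : (W a₆).Nonsingular x y) (hy : y ≠ 0)
    (hψ : x ^ 3 + a₆ ≠ 0) :
    ∃ (x₃ y₃ : k) (h₃ : (W a₆).Nonsingular x₃ y₃), 3 • Point.some _ _ h = Point.some _ _ h₃ ∧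
      x₃ * (x ^ 3 + a₆) ^ 2 = x ^ 9 - a₆ * x ^ 3 + a₆ ^ 3 := by
  have hdbl := addX_W_self_sub h.1 hy
  set x₂ := (W a₆).addX x x ((W a₆).slope x x y y) with hx₂
  have hx : x ≠ x₂ := by
    intro hx
    rw [← hx, sub_self, eq_comm, neg_div, neg_eq_zero, div_eq_zero_iff] at hdbl
    exact hψ (hdbl.resolve_right (pow_ne_zero 2 hy))
  refine ⟨_, _, _, by
    rw [three_nsmul, Point.add_self_of_Y_ne (Y_ne_negY_W hy), Point.add_of_X_ne hx], ?_⟩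
  rw [addX_W, slope_of_X_ne hx, addY_W, ← hx₂, slope_W_self hy]
  clear_value x₂
  obtain rfl : x₂ = x - (x ^ 3 + a₆) / y ^ 2 := by linear_combination hdbl
  rw [sub_sub_cancel]
  field_simp
  obtain rfl : a₆ = y ^ 2 - x ^ 3 - x ^ 2 := by linear_combination -equation_W_iff.1 h.1
  linear_combination (norm := ring_nf)
  reduce_mod_char!

lemma exists_addOrderOf_eq_nine (v : k) (hv : v ^ 3 - v ≠ 0) :
    ∃ P : (W ((v ^ 3 - v) ^ 9)).Point, addOrderOf P = 9 := by
  have hv' : v * (v - 1) * (v + 1) ≠ 0 := by convert hv using 1; ring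
  simp only [mul_ne_zero_iff] at hv'
  obtain ⟨⟨hv₀, hv₁⟩, hv₂⟩ := hv'
  set c := v ^ 3 - v
  set x := v ^ 2 + v ^ 5 - v ^ 6 - v ^ 9
  set y := -v ^ 2 + v ^ 4 - v ^ 5 + v ^ 7
  have heq : y ^ 2 = x ^ 3 + x ^ 2 + c ^ 9 := by
    simp only [x, y, c]
    linear_combination (norm := ring_nf)
    reduce_mod_char!
  have hy : y ≠ 0 := by
    rw [show y = v ^ 2 * (v - 1) * (v + 1) ^ 4 by
      simp only [y]
      linear_combination (norm := ring_nf)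
      reduce_mod_char!]
    exact mul_ne_zero (mul_ne_zero (pow_ne_zero 2 hv₀) hv₁) (pow_ne_zero 4 hv₂)
  have hψ : x ^ 3 + c ^ 9 ≠ 0 := by
    rw [show x ^ 3 + c ^ 9 = -(v ^ 2 * (v - 1) * (v + 1) ^ 3) ^ 3 by
      simp only [x, c]
      linear_combination (norm := ring_nf)
      reduce_mod_char!]
    exact neg_ne_zero.2 <| pow_ne_zero 3 <|
      mul_ne_zero (mul_ne_zero (pow_ne_zero 2 hv₀) hv₁) (pow_ne_zero 3 hv₂)
  have hP := nonsingular_W_of_Y_ne_zero heq hy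
  obtain ⟨x₃, y₃, h₃, h3P, hx₃⟩ := exists_three_nsmul_some_eq hP hy hψ
  -- `x⁹ - c⁹x³ + c²⁷ = (x³ - c³x + c⁹)³` and `x³ - c³x + c⁹ = -c (x + c³)²` for this `x`
  have hx₃' : x₃ = -c ^ 3 := by
    refine mul_right_cancel₀ (pow_ne_zero 2 hψ) (hx₃.trans ?_)
    simp only [x, c]
    linear_combination (norm := ring_nf)
    reduce_mod_char!
  have h9P : 3 • 3 • Point.some _ _ hP = 0 := by
    rw [h3P, three_nsmul_some_eq_zero_iff, hx₃']
    ring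
  refine ⟨Point.some _ _ hP, (addOrderOf_eq_prime_pow (n := 1) ?_ ?_ : _ = 3 ^ 2)⟩
  · rw [pow_one, h3P]
    exact Point.some_ne_zero h₃
  · rwa [show 3 ^ (1 + 1) = 3 * 3 by norm_num, mul_nsmul]

lemma exists_eq_cube_sub_self_of_addOrderOf_eq_nine (ha₆ : a₆ ≠ 0) {P : (W a₆).Point}
    (hP : addOrderOf P = 9) : ∃ u : k, a₆ = u ^ 3 - u := by
  have h9 : 9 • P = 0 := hP ▸ addOrderOf_nsmul_eq_zero P
  have hdvd {n : ℕ} (h : n • P = 0) : 9 ∣ n := hP ▸ addOrderOf_dvd_of_nsmul_eq_zero h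
  rcases P with _ | ⟨x, y, h⟩
  · simp [← Point.zero_def] at hP
  have hy : y ≠ 0 := by
    rintro rfl
    refine absurd (hdvd (n := 2) ?_) (by norm_num)
    rw [two_nsmul, Point.add_self_of_Y_eq (by rw [negY_W, neg_zero])]
  have hψ : x ^ 3 + a₆ ≠ 0 := fun hψ =>
    absurd (hdvd ((three_nsmul_some_eq_zero_iff h).2 hψ)) (by norm_num)
  obtain ⟨x₃, y₃, h₃, h3P, hx₃⟩ := exists_three_nsmul_some_eq h hy hψ
  have hx₃a : x₃ ^ 3 + a₆ = 0 := by
    rw [← three_nsmul_some_eq_zero_iff h₃, ← h3P, ← mul_nsmul]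
    exact h9
  refine exists_eq_cube_sub_self (ξ := x₃) (t := x ^ 3) ?_ (eq_neg_of_add_eq_zero_left hx₃a) ?_
  · rintro rfl
    exact ha₆ (by linear_combination hx₃a)
  · linear_combination hx₃

end CharThreeCurve

open Classical in
/-- Over a perfect field `k` of characteristic `3`, the elliptic curve `Y² = X³ + X² + a₆`
(with `a₆ ≠ 0`) has a `k`-rational point of order `9` if and only if `a₆ = u³ - u` for some
`u ∈ k`. -/
theorem stmt9 {k : Type*} [Field k] [CharP k 3] [PerfectField k] (a₆ : k) (ha₆ : a₆ ≠ 0) :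
    (∃ P : (WeierstrassCurve.mk 0 1 0 0 a₆ : WeierstrassCurve k).toAffine.Point,
        addOrderOf P = 9) ↔
      ∃ u : k, a₆ = u ^ 3 - u := by
  refine ⟨fun ⟨P, hP⟩ => CharThreeCurve.exists_eq_cube_sub_self_of_addOrderOf_eq_nine ha₆ hP, ?_⟩
  rintro ⟨u, rfl⟩
  obtain ⟨v, rfl⟩ := (bijective_iterateFrobenius k 3 2).2 u
  have hv : iterateFrobenius k 3 2 v ^ 3 - iterateFrobenius k 3 2 v = (v ^ 3 - v) ^ 3 ^ 2 := by
    rw [sub_pow_char_pow, iterateFrobenius_def, ← pow_mul, ← pow_mul, mul_comm]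
  rw [hv] at ha₆ ⊢
  exact CharThreeCurve.exists_addOrderOf_eq_nine v fun h => ha₆ (by rw [h]; norm_num)
end

section
/- Let k be a field of characteristic 3, let a₆ ∈ k with a₆ ≠ 0, and let W be the elliptic curve over k given by Y² = X³ + X² + a₆. Let P = (x, y) be a k-rational affine point of W with x³ + a₆ ≠ 0. Then 3·P (in the group of k-rational points of W) is an affine point whose X-coordinate equals (x⁹ − a₆x³ + a₆³)/(x³ + a₆)². -/
/-!
In characteristic `3` the tangent at `P = (x, y)`, `y ≠ 0`, has slope `x / y`, and `2P` has
`X`-coordinate `x - (x³ + a₆) / y²`; so `x³ + a₆ ≠ 0` says exactly that `2P ≠ ±P`, and the chord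
through `2P` and `P` gives `X(3P) = x + y²(y⁴ - x(x³ + a₆)) / (x³ + a₆)²`. Since
`(x³ + x² + a₆)³ = x⁹ + x⁶ + a₆³` in characteristic `3`, substituting `y² = x³ + x² + a₆` turns
this into the claimed formula. When `y = 0`, `P` is `2`-torsion, so `3P = P`, and the formula
reduces to `x`.
-/

open WeierstrassCurve.Affine

namespace WeierstrassCurve.Affine.Point

variable {F : Type*} [Field F] {W : Affine F} {x y : F}

lemma exists_some_eq_of_X_eq {x' : F} {h : W.Nonsingular x y} (hx : x = x') :
    ∃ (y' : F) (h' : W.Nonsingular x' y'), some _ _ h = some _ _ h' := by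
  subst hx
  exact ⟨y, h, rfl⟩

variable [DecidableEq F]

lemma three_nsmul_some_of_Y_eq {h : W.Nonsingular x y} (hy : y = W.negY x y) :
    3 • some _ _ h = some _ _ h := by
  rw [succ_nsmul, two_nsmul, add_self_of_Y_eq hy, zero_add]

lemma three_nsmul_some_of_addX_ne {h : W.Nonsingular x y} (hy : y ≠ W.negY x y)
    (hx : W.addX x x (W.slope x x y y) ≠ x) :
    3 • some _ _ h = some _ _ (nonsingular_add (nonsingular_add h h fun hxy => hy hxy.2) h
      fun hxy => hx hxy.1) := by
  rw [succ_nsmul, two_nsmul, add_self_of_Y_ne hy, add_of_X_ne hx]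

end WeierstrassCurve.Affine.Point

section CharThree

variable {k : Type*} [Field k] {a₆ x y : k}

local notation "𝓔" => WeierstrassCurve.toAffine (WeierstrassCurve.mk (R := k) 0 1 0 0 a₆)

lemma charThree_equation_iff : (𝓔).Equation x y ↔ y ^ 2 = x ^ 3 + x ^ 2 + a₆ := by
  simp [equation_iff]

lemma charThree_negY : (𝓔).negY x y = -y := by
  simp

variable (h3 : (3 : k) = 0)
include h3

lemma charThree_Y_ne_negY (hy : y ≠ 0) : y ≠ (𝓔).negY x y := by
  rw [charThree_negY]
  contrapose! hy
  linear_combination -hy + y * h3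

lemma charThree_slope_self [DecidableEq k] (hy : y ≠ 0) : (𝓔).slope x x y y = x / y := by
  rw [slope_of_Y_ne rfl (charThree_Y_ne_negY h3 hy),
    div_eq_div_iff (sub_ne_zero.mpr (charThree_Y_ne_negY h3 hy)) hy, charThree_negY]
  linear_combination x ^ 2 * y * h3

lemma charThree_addX_self (hE : y ^ 2 = x ^ 3 + x ^ 2 + a₆) (hy : y ≠ 0) :
    (𝓔).addX x x (x / y) = x - (x ^ 3 + a₆) / y ^ 2 := by
  simp only [addX]
  field_simp
  linear_combination -hE - x * y ^ 2 * h3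

lemma charThree_addY_self (hE : y ^ 2 = x ^ 3 + x ^ 2 + a₆) (hy : y ≠ 0) :
    (𝓔).addY x x y (x / y) = (x * (x ^ 3 + a₆) - y ^ 4) / y ^ 3 := by
  rw [addY, negAddY, charThree_addX_self h3 hE hy, charThree_negY]
  field_simp
  ring

lemma charThree_slope_triple [DecidableEq k] (hy : y ≠ 0) (hx : x ^ 3 + a₆ ≠ 0) :
    (𝓔).slope (x - (x ^ 3 + a₆) / y ^ 2) x ((x * (x ^ 3 + a₆) - y ^ 4) / y ^ 3) y =
      -(y ^ 4 + x * (x ^ 3 + a₆)) / (y * (x ^ 3 + a₆)) := by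
  rw [slope_of_X_ne (by simp [*]), sub_sub_cancel_left]
  field_simp
  linear_combination y ^ 4 * h3

lemma charThree_addX_triple (hE : y ^ 2 = x ^ 3 + x ^ 2 + a₆) (hy : y ≠ 0)
    (hx : x ^ 3 + a₆ ≠ 0) :
    (𝓔).addX (x - (x ^ 3 + a₆) / y ^ 2) x (-(y ^ 4 + x * (x ^ 3 + a₆)) / (y * (x ^ 3 + a₆))) =
      x + y ^ 2 * (y ^ 4 - x * (x ^ 3 + a₆)) / (x ^ 3 + a₆) ^ 2 := by
  simp only [addX]
  field_simp
  linear_combination (-(x ^ 3 + a₆) ^ 2) * hE +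
    (x * (x ^ 3 + a₆) * y ^ 4 - x * y ^ 2 * (x ^ 3 + a₆) ^ 2) * h3

lemma charThree_triplication_formula_eq (hE : y ^ 2 = x ^ 3 + x ^ 2 + a₆)
    (hx : x ^ 3 + a₆ ≠ 0) :
    (x ^ 9 - a₆ * x ^ 3 + a₆ ^ 3) / (x ^ 3 + a₆) ^ 2 =
      x + y ^ 2 * (y ^ 4 - x * (x ^ 3 + a₆)) / (x ^ 3 + a₆) ^ 2 := by
  have frobenius : x ^ 9 - a₆ * x ^ 3 + a₆ ^ 3 = x * (x ^ 3 + a₆) ^ 2 +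
      (x ^ 3 + x ^ 2 + a₆) * ((x ^ 3 + x ^ 2 + a₆) ^ 2 - x * (x ^ 3 + a₆)) := by
    linear_combination
      (-(x ^ 2 * a₆ ^ 2 + x ^ 3 * a₆ ^ 2 + x ^ 4 * a₆ + 2 * x ^ 5 * a₆ + x ^ 6 * a₆ + x ^ 7 +
        x ^ 8)) * h3
  rw [frobenius, ← hE]
  field_simp

end CharThree

open Classical in
theorem stmt10_general {k : Type*} [Field k] [CharP k 3] (a₆ : k) (x y : k)
    (h : (WeierstrassCurve.mk 0 1 0 0 a₆ : WeierstrassCurve k).toAffine.Nonsingular x y)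
    (hx : x ^ 3 + a₆ ≠ 0) :
    ∃ (y' : k)
      (h' : (WeierstrassCurve.mk 0 1 0 0 a₆ : WeierstrassCurve k).toAffine.Nonsingular
        ((x ^ 9 - a₆ * x ^ 3 + a₆ ^ 3) / (x ^ 3 + a₆) ^ 2) y'),
      3 • WeierstrassCurve.Affine.Point.some _ _ h = WeierstrassCurve.Affine.Point.some _ _ h' := by
  have h3 : (3 : k) = 0 := CharP.cast_eq_zero k 3
  have hE := charThree_equation_iff.mp h.1
  rw [charThree_triplication_formula_eq h3 hE hx]
  by_cases hy : y = 0
  · subst hy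
    rw [Point.three_nsmul_some_of_Y_eq (by simp)]
    exact Point.exists_some_eq_of_X_eq (by simp)
  · rw [Point.three_nsmul_some_of_addX_ne (h := h) (charThree_Y_ne_negY h3 hy)
      (by rw [charThree_slope_self h3 hy, charThree_addX_self h3 hE hy]; simpa [hy] using hx)]
    refine Point.exists_some_eq_of_X_eq ?_
    rw [charThree_slope_self h3 hy, charThree_addX_self h3 hE hy, charThree_addY_self h3 hE hy,
      charThree_slope_triple h3 hy hx, charThree_addX_triple h3 hE hy hx]

open Classical in
/-- Triplication formula in characteristic `3`: for an affine point `P = (x, y)` on the elliptic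
curve `Y² = X³ + X² + a₆` with `x³ + a₆ ≠ 0`, the point `3 • P` is affine with `X`-coordinate
`(x⁹ - a₆x³ + a₆³) / (x³ + a₆)²`. -/
theorem stmt10 {k : Type*} [Field k] [CharP k 3] (a₆ : k) (ha₆ : a₆ ≠ 0) (x y : k)
    (h : (WeierstrassCurve.mk 0 1 0 0 a₆ : WeierstrassCurve k).toAffine.Nonsingular x y)
    (hx : x ^ 3 + a₆ ≠ 0) :
    ∃ (y' : k)
      (h' : (WeierstrassCurve.mk 0 1 0 0 a₆ : WeierstrassCurve k).toAffine.Nonsingular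
        ((x ^ 9 - a₆ * x ^ 3 + a₆ ^ 3) / (x ^ 3 + a₆) ^ 2) y'),
      3 • WeierstrassCurve.Affine.Point.some _ _ h = WeierstrassCurve.Affine.Point.some _ _ h' :=
  stmt10_general a₆ x y h hx
end

section
/- Let F_q be a finite field of characteristic 2 and let K = F_q(T) be the field of rational functions over F_q. Let E be the elliptic curve over K given by Y² + XY = X³ + (1/T)X² + (T−1)/T⁴. Then the affine point (1/T, 1/T²) is a K-rational point of order 3 on E. -/
/-!
In characteristic `2`, on a curve with `a₁ = 1` and `a₃ = a₄ = 0`, the tangent at `P = (x, x²)`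
has slope `(x² + y) / x = 0`, so `2P` has `X`-coordinate `-a₂ - 2x = a₂`. When `a₂ = x` this gives
`2P = ±P`, and `2P = P` is impossible for `P ≠ 0`, hence `2P = -P`. For `x = 1/T` the point lies on
the curve because `(T - 1)/T⁴ = T⁻⁴ + T⁻³` in characteristic `2`.
-/

namespace WeierstrassCurve.Affine

variable {F : Type*} [Field F] {W : Affine F}

lemma nonsingular_of_Y_ne_negY {x y : F} (h : W.Equation x y) (hy : y ≠ W.negY x y) :
    W.Nonsingular x y :=
  (W.nonsingular_iff x y).mpr ⟨h, Or.inr hy⟩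

lemma Point.addOrderOf_some_eq_three [DecidableEq F] {x y : F} {h : W.Nonsingular x y}
    (hy : y ≠ W.negY x y) (hx : W.addX x x (W.slope x x y y) = x) :
    addOrderOf (some x y h) = 3 := by
  have hP : some x y h ≠ 0 := some_ne_zero h
  have h2P : some x y h + some x y h = -some x y h := by
    have hdouble := (X_eq_iff (h₁ := nonsingular_add h h fun hxy => hy hxy.2) (h₂ := h)).mp hx
    rw [← add_self_of_Y_ne hy] at hdouble
    exact hdouble.resolve_left fun hself => hP (add_eq_left.mp hself)
  have : Fact (Nat.Prime 3) := ⟨Nat.prime_three⟩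
  refine addOrderOf_eq_prime ?_ hP
  rw [succ_nsmul, two_nsmul, h2P, neg_add_cancel]

section CharTwo

variable [CharP F 2] (hW₁ : W.a₁ = 1) (hW₃ : W.a₃ = 0)
include hW₁ hW₃

lemma negY_eq_add_of_charTwo (x y : F) : W.negY x y = y + x := by
  rw [negY, hW₁, hW₃]
  linear_combination (-y - x) * (CharTwo.two_eq_zero : (2 : F) = 0)

lemma Y_ne_negY_of_charTwo {x : F} (y : F) (hx : x ≠ 0) : y ≠ W.negY x y := by
  rw [negY_eq_add_of_charTwo hW₁ hW₃]
  simpa using hx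

lemma Point.addOrderOf_some_sq_eq_three_of_charTwo [DecidableEq F] (hW₄ : W.a₄ = 0) {x y : F}
    (hW₂ : W.a₂ = x) (hxy : y = x ^ 2) (hx : x ≠ 0) {h : W.Nonsingular x y} :
    addOrderOf (some x y h) = 3 := by
  have hy := Y_ne_negY_of_charTwo hW₁ hW₃ y hx
  have hslope : W.slope x x y y = 0 := by
    rw [slope_of_Y_ne rfl hy, hW₁, hW₂, hW₄, hxy, div_eq_zero_iff]
    exact .inl (by linear_combination (2 * x ^ 2) * (CharTwo.two_eq_zero : (2 : F) = 0))
  refine addOrderOf_some_eq_three hy ?_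
  rw [hslope, addX, hW₁, hW₂]
  linear_combination (-2 * x) * (CharTwo.two_eq_zero : (2 : F) = 0)

end CharTwo

end WeierstrassCurve.Affine

open WeierstrassCurve.Affine WeierstrassCurve.Affine.Point

open Classical in
theorem stmt14_general {Fq : Type*} [Field Fq] [CharP Fq 2] :
    letI K := RatFunc Fq
    letI T : K := RatFunc.X
    letI E : WeierstrassCurve K := ⟨1, 1 / T, 0, 0, (T - 1) / T ^ 4⟩
    ∃ h : E.toAffine.Nonsingular (1 / T) (1 / T ^ 2),
      addOrderOf (WeierstrassCurve.Affine.Point.some _ _ h) = 3 := by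
  have hT : (1 / RatFunc.X : RatFunc Fq) ≠ 0 := one_div_ne_zero RatFunc.X_ne_zero
  have heq : WeierstrassCurve.Affine.Equation
      ⟨1, 1 / RatFunc.X, 0, 0, (RatFunc.X - 1) / RatFunc.X ^ 4⟩
      (1 / RatFunc.X : RatFunc Fq) (1 / RatFunc.X ^ 2) := by
    rw [equation_iff]
    field_simp
    congr 1
    linear_combination (1 - RatFunc.X) * (CharTwo.two_eq_zero : (2 : RatFunc Fq) = 0)
  exact ⟨nonsingular_of_Y_ne_negY heq (Y_ne_negY_of_charTwo rfl rfl _ hT),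
    addOrderOf_some_sq_eq_three_of_charTwo rfl rfl rfl rfl (by ring) hT⟩

open Classical in
/-- Let `F_q` be a finite field of characteristic `2` and `K = F_q(T)`. Then `(1/T, 1/T²)` is a
`K`-rational point of order `3` on the elliptic curve `Y² + XY = X³ + (1/T)X² + (T-1)/T⁴`. -/
theorem stmt14 {Fq : Type*} [Field Fq] [Fintype Fq] [CharP Fq 2] :
    letI K := RatFunc Fq
    letI T : K := RatFunc.X
    letI E : WeierstrassCurve K := ⟨1, 1 / T, 0, 0, (T - 1) / T ^ 4⟩
    ∃ h : E.toAffine.Nonsingular (1 / T) (1 / T ^ 2),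
      addOrderOf (WeierstrassCurve.Affine.Point.some _ _ h) = 3 :=
  stmt14_general
end

section
/- Let q be a power of 3 with q ≥ 9 and let F_q be the finite field with q elements. Then the number of pairs (w, u) ∈ F_q × F_q satisfying u³ − u = w³ − w² is strictly less than 3(q − 2). -/
/-!
The absolute trace `Tr x = ∑_{i<n} x^(p^i)` of a field with `q = p^n` elements kills every
`u^p - u`, so on the curve `u^p - u = w^p - w^2` we get `Tr (w^2 - w) = Tr (w^p - w) - Tr (u^p - u) = 0`.
Hence `w` is a root of the polynomial `Tr (X^2 - X)` of degree `2q/p`, and each such `w` lies under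
at most `p` points `(w, u)`. So the curve has at most `2q` affine points, and `2q < 3(q - 2)` for `q > 6`.
-/

open Polynomial Finset

section AbsTrace

variable (p n : ℕ) {R : Type*} [CommRing R]

def absTrace (x : R) : R := ∑ i ∈ range n, x ^ p ^ i

noncomputable def absTracePoly : R[X] := ∑ i ∈ range n, X ^ p ^ i

variable {p n}

@[simp]
theorem eval_absTracePoly (x : R) : (absTracePoly p n).eval x = absTrace p n x := by
  simp [absTracePoly, absTrace, eval_finsetSum]

theorem absTrace_sub [Fact p.Prime] [CharP R p] (x y : R) :
    absTrace p n (x - y) = absTrace p n x - absTrace p n y := by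
  simp only [absTrace, sub_pow_char_pow, sum_sub_distrib]

theorem natDegree_absTracePoly_lt [Nontrivial R] (hp : 1 < p) :
    (absTracePoly p n : R[X]).natDegree < p ^ n := by
  induction n with
  | zero => simp [absTracePoly]
  | succ n ih =>
    rw [absTracePoly, sum_range_succ, natDegree_add_eq_right_of_natDegree_lt] <;>
      rw [natDegree_X_pow]
    · exact Nat.pow_lt_pow_right hp n.lt_succ_self
    · exact ih

theorem natDegree_absTracePoly_succ [Nontrivial R] (hp : 1 < p) :
    (absTracePoly p (n + 1) : R[X]).natDegree = p ^ n := by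
  rw [absTracePoly, sum_range_succ, natDegree_add_eq_right_of_natDegree_lt] <;>
    rw [natDegree_X_pow]
  exact natDegree_absTracePoly_lt hp

end AbsTrace

section FiniteField

variable {p n : ℕ} [Fact p.Prime] {K : Type*} [Field K] [Fintype K] [CharP K p]

theorem absTrace_pow_char_sub_self (hK : Fintype.card K = p ^ n) (x : K) :
    absTrace p n (x ^ p - x) = 0 := by
  have hfrob (i : ℕ) : (x ^ p) ^ p ^ i = x ^ p ^ (i + 1) := by rw [← pow_mul, pow_succ']
  rw [absTrace_sub, absTrace, absTrace, ← sum_sub_distrib]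
  simp only [hfrob]
  rw [sum_range_sub (fun i => x ^ p ^ i), ← hK, FiniteField.pow_card, pow_zero, pow_one, sub_self]

theorem absTrace_sq_sub_self_eq_zero (hK : Fintype.card K = p ^ n) {w u : K}
    (h : u ^ p - u = w ^ p - w ^ 2) : absTrace p n (w ^ 2 - w) = 0 := by
  have hsplit : w ^ 2 - w = (w ^ p - w) - (u ^ p - u) := by rw [h]; ring
  rw [hsplit, absTrace_sub, absTrace_pow_char_sub_self hK, absTrace_pow_char_sub_self hK, sub_zero]

end FiniteField

section Counting

variable {p : ℕ} {K : Type*} [Field K] [Fintype K] [DecidableEq K]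

theorem card_absTrace_sq_sub_self_eq_zero_le (hp : 1 < p) (m : ℕ) :
    #{w : K | absTrace p (m + 1) (w ^ 2 - w) = 0} ≤ 2 * p ^ m := by
  set f : K[X] := (absTracePoly p (m + 1)).comp (X ^ 2 - X)
  have hf : f.natDegree = 2 * p ^ m := by
    rw [natDegree_comp, natDegree_absTracePoly_succ hp, mul_comm]
    congr
    compute_degree!
  have hf0 : f ≠ 0 := ne_zero_of_natDegree_gt (n := 0) (by rw [hf]; positivity)
  rw [← hf]
  refine card_le_degree_of_subset_roots fun w hw => ?_
  simp_all [f, mem_roots hf0, eval_comp]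

theorem card_pow_sub_self_eq_le (hp : 1 < p) (c : K) : #{u : K | u ^ p - u = c} ≤ p := by
  have hf : (X ^ p - X - C c : K[X]).natDegree = p := by
    rw [natDegree_sub_C, FiniteField.X_pow_card_sub_X_natDegree_eq K hp]
  have hf0 : (X ^ p - X - C c : K[X]) ≠ 0 := ne_zero_of_natDegree_gt (n := 0) (by omega)
  conv_rhs => rw [← hf]
  refine card_le_degree_of_subset_roots fun u hu => ?_
  simp_all [mem_roots hf0, sub_eq_zero]

end Counting

theorem Finset.card_filter_prod_le_mul {α β : Type*} [Fintype α] [Fintype β] [DecidableEq α]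
    (P : α → β → Prop) [∀ a b, Decidable (P a b)] (s : Finset α) (hs : ∀ a b, P a b → a ∈ s)
    (k : ℕ) (hk : ∀ a ∈ s, #{b | P a b} ≤ k) : #{x : α × β | P x.1 x.2} ≤ k * #s := by
  refine card_le_mul_card_image_of_maps_to (f := Prod.fst) (fun x hx => hs _ _ (mem_filter.1 hx).2) k
    fun a ha => (hk a ha).trans' ?_
  refine card_le_card_of_injOn Prod.snd (fun x hx => ?_) fun x hx y hy hxy => ?_
  · obtain ⟨hP, rfl⟩ := by simpa using hx
    simpa using hP
  · simp_all [Prod.ext_iff]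

theorem card_pow_char_sub_self_eq_pow_char_sub_sq_le (p : ℕ) [Fact p.Prime] {K : Type*} [Field K]
    [Fintype K] [CharP K p] [DecidableEq K] :
    #{x : K × K | x.2 ^ p - x.2 = x.1 ^ p - x.1 ^ 2} ≤ 2 * Fintype.card K := by
  have hp : 1 < p := (Fact.out : p.Prime).one_lt
  obtain ⟨n, -, hK⟩ := FiniteField.card K p
  obtain ⟨m, hm⟩ := Nat.exists_eq_add_one.2 n.pos
  rw [hm] at hK
  calc #{x : K × K | x.2 ^ p - x.2 = x.1 ^ p - x.1 ^ 2}
      ≤ p * #{w : K | absTrace p (m + 1) (w ^ 2 - w) = 0} :=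
        card_filter_prod_le_mul (fun w u => u ^ p - u = w ^ p - w ^ 2) _
          (fun w u h => mem_filter.2 ⟨mem_univ w, absTrace_sq_sub_self_eq_zero hK h⟩) p
          fun w _ => card_pow_sub_self_eq_le hp _
    _ ≤ p * (2 * p ^ m) := Nat.mul_le_mul_left p (card_absTrace_sq_sub_self_eq_zero_le hp m)
    _ = 2 * Fintype.card K := by rw [hK]; ring

/-- If `F_q` is a finite field of characteristic `3` with `q ≥ 9` elements, then the number of
pairs `(w, u) ∈ F_q × F_q` with `u³ - u = w³ - w²` is strictly less than `3(q - 2)`. -/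
theorem stmt15 {Fq : Type*} [Field Fq] [Fintype Fq] [CharP Fq 3] [DecidableEq Fq]
    (hq : 9 ≤ Fintype.card Fq) :
    (Finset.univ.filter fun p : Fq × Fq => p.2 ^ 3 - p.2 = p.1 ^ 3 - p.1 ^ 2).card <
      3 * (Fintype.card Fq - 2) := by
  have : Fact (Nat.Prime 3) := ⟨Nat.prime_three⟩
  have := card_pow_char_sub_self_eq_pow_char_sub_sq_le 3 (K := Fq)
  omega
end

section
/- Let q be a power of 4, let F_q be the finite field with q elements (so F_q has characteristic 2 and contains the field with 4 elements), and let K = F_q(T). Let E be the elliptic curve over K given by Y² + TXY + Y = X³ + T³ + 1. Then all 3-torsion points of E are K-rational; that is, the set of K-rational points P of E with 3·P = O has exactly 9 elements. -/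
/-!
A nonsingular point `P = (x, y)` is `3`-torsion iff `2P = -P`, i.e. iff `P` is not `2`-torsion and
`x(2P) = x`; by the duplication formula `(x(2P) - x) ψ₂² = -ψ₃(x)`, the latter means `ψ₃(x) = 0`.
In characteristic `2`, with `w² + w + 1 = 0`, the `3`-division polynomial of
`Y² + TXY + Y = X³ + T³ + 1` splits over `K` as
`(X - T²)(X - (T + 1))(X - (wT + w²))(X - (w²T + w))`, and above each root lies a `K`-rational point
that is not `2`-torsion. Each root thus carries two `3`-torsion points, giving `1 + 2 · 4 = 9`.
Every nondegeneracy needed (distinct roots, nonzero discriminant, no `2`-torsion above a root) is a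
factor of `T³ + 1 = (T + 1)(T + w)(T + w²)`, so it suffices that `T³ ≠ 1`; over `F_q(T)` this holds,
and `F_q` contains `w` because `3 ∣ q - 1`.
-/

open WeierstrassCurve Polynomial

namespace WeierstrassCurve.Affine

variable {F : Type*} [Field F] {W : WeierstrassCurve.Affine F}

lemma ncard_setOf_forall_X_mem {R : Finset F}
    (hR : ∀ x ∈ R, ∃ y, W.Nonsingular x y ∧ y ≠ W.negY x y) :
    {P : W.Point | ∀ x y (h : W.Nonsingular x y), P = .some x y h → x ∈ R}.ncard
      = 2 * R.card + 1 := by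
  choose! y hy hne using hR
  let P (r : R) : W.Point := .some r (y r) (hy r r.2)
  let f : Option (R ⊕ R) → W.Point
    | none => 0
    | some (.inl r) => P r
    | some (.inr r) => -P r
  have hf : f.Injective := by
    rintro (_ | r | r) (_ | s | s) h <;>
      simp only [f, P, Point.neg_some, Point.zero_def, Point.some.injEq, reduceCtorEq] at h
    · rfl
    all_goals obtain rfl := Subtype.ext h.1
    · rfl
    · exact absurd h.2 (hne r r.2)
    · exact absurd h.2.symm (hne r r.2)
    · rfl
  have hrange : Set.range f = {P | ∀ x y (h : W.Nonsingular x y), P = .some x y h → x ∈ R} := by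
    ext Q
    constructor
    · rintro ⟨_ | r | r, rfl⟩ x y' h' hQ <;>
        simp only [f, P, Point.neg_some, Point.zero_def, Point.some.injEq, reduceCtorEq] at hQ
      all_goals exact hQ.1 ▸ r.2
    · intro hQ
      rcases Q with _ | ⟨x, y', h⟩
      · exact ⟨none, rfl⟩
      have hx := hQ x y' h rfl
      rcases (Point.X_eq_iff (h₁ := h) (h₂ := hy x hx)).mp rfl with e | e
      · exact ⟨some (.inl ⟨x, hx⟩), e.symm⟩
      · exact ⟨some (.inr ⟨x, hx⟩), e.symm⟩
  rw [← hrange, Set.ncard_range_of_injective hf, Nat.card_eq_fintype_card, Fintype.card_option,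
    Fintype.card_sum, Fintype.card_coe]
  ring

variable [DecidableEq F]

lemma addX_slope_sub_mul_sq {x y : F} (h : W.Equation x y) (hy : y ≠ W.negY x y) :
    (W.addX x x (W.slope x x y y) - x) * (y - W.negY x y) ^ 2 = -W.Ψ₃.eval x := by
  have hD : y - W.negY x y ≠ 0 := sub_ne_zero.mpr hy
  rw [equation_iff] at h
  rw [slope_of_Y_ne rfl hy, addX]
  field_simp
  simp only [Ψ₃, b₂, b₄, b₆, b₈, negY, eval_add, eval_mul, eval_pow, eval_C, eval_X, eval_ofNat]
  linear_combination (-(W.a₁ ^ 2 + 4 * W.a₂ + 12 * x)) * h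

lemma addX_slope_eq_self_iff {x y : F} (h : W.Equation x y) (hy : y ≠ W.negY x y) :
    W.addX x x (W.slope x x y y) = x ↔ W.Ψ₃.eval x = 0 := by
  rw [← sub_eq_zero, ← mul_eq_zero_iff_right (pow_ne_zero 2 (sub_ne_zero.mpr hy)),
    addX_slope_sub_mul_sq h hy, neg_eq_zero]

lemma three_nsmul_some_eq_zero_iff {x y : F} (h : W.Nonsingular x y) :
    3 • Point.some x y h = 0 ↔ y ≠ W.negY x y ∧ W.Ψ₃.eval x = 0 := by
  rw [show 3 • Point.some x y h = Point.some x y h + Point.some x y h + Point.some x y h by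
    abel, add_eq_zero_iff_eq_neg]
  by_cases hy : y = W.negY x y
  · rw [Point.add_self_of_Y_eq hy]
    exact iff_of_false (fun h0 => Point.some_ne_zero h (neg_eq_zero.mp h0.symm)) (·.1 hy)
  · rw [Point.add_self_of_Y_ne hy, Point.neg_some, Point.some.injEq,
      ← addX_slope_eq_self_iff h.1 hy]
    refine ⟨fun h' => ⟨hy, h'.1⟩, fun h' => ⟨h'.2, ?_⟩⟩
    rw [addY, negAddY, h'.2, sub_self, mul_zero, zero_add]

end WeierstrassCurve.Affine

section FullThreeTorsion

variable {K : Type*} [Field K] [CharP K 2] {w T x : K}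

def fullThreeTorsionCurve (T : K) : WeierstrassCurve K := ⟨T, 0, 1, 0, T ^ 3 + 1⟩

lemma fullThreeTorsionCurve_Δ : (fullThreeTorsionCurve T).Δ = (T ^ 3 + 1) ^ 3 := by
  simp only [fullThreeTorsionCurve, Δ, b₂, b₄, b₆, b₈]
  grind

lemma fullThreeTorsionCurve_negY (x y : K) :
    (fullThreeTorsionCurve T).toAffine.negY x y = y + (T * x + 1) := by
  simp only [fullThreeTorsionCurve, Affine.negY]
  grind

lemma fullThreeTorsionCurve_Ψ₃_eval (hw : w ^ 2 + w + 1 = 0) (x : K) :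
    (fullThreeTorsionCurve T).Ψ₃.eval x =
      (x - T ^ 2) * (x - (T + 1)) * (x - (w * T + w + 1)) * (x - ((w + 1) * T + w)) := by
  simp [fullThreeTorsionCurve, Ψ₃, b₂, b₄, b₆, b₈]
  grind

variable [DecidableEq K]

-- The four roots of `Ψ₃`, with `w²` written as `w + 1` (characteristic `2`).
def threeTorsionX (w T : K) : Finset K := {T ^ 2, T + 1, w * T + w + 1, (w + 1) * T + w}

lemma card_threeTorsionX (hw : w ^ 2 + w + 1 = 0) (hT : T ^ 3 ≠ 1) :
    (threeTorsionX w T).card = 4 := by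
  rw [threeTorsionX, Finset.card_eq_four]
  refine ⟨_, _, _, _, ?_, ?_, ?_, ?_, ?_, ?_, rfl⟩ <;> intro h <;> apply hT <;> grind

lemma ne_negY_of_mem_threeTorsionX (hw : w ^ 2 + w + 1 = 0) (hT : T ^ 3 ≠ 1)
    (hx : x ∈ threeTorsionX w T) (y : K) : y ≠ (fullThreeTorsionCurve T).toAffine.negY x y := by
  rw [fullThreeTorsionCurve_negY, ne_eq, left_eq_add]
  simp only [threeTorsionX, Finset.mem_insert, Finset.mem_singleton] at hx
  rcases hx with rfl | rfl | rfl | rfl <;> intro h <;> apply hT <;> grind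

lemma exists_nonsingular_of_mem_threeTorsionX (hw : w ^ 2 + w + 1 = 0) (hT : T ^ 3 ≠ 1)
    (hx : x ∈ threeTorsionX w T) : ∃ y, (fullThreeTorsionCurve T).toAffine.Nonsingular x y := by
  have hΔ : (fullThreeTorsionCurve T).Δ ≠ 0 := by
    rw [fullThreeTorsionCurve_Δ]
    exact pow_ne_zero 3 fun h => hT (by grind)
  simp_rw [← Affine.equation_iff_nonsingular_of_Δ_ne_zero hΔ, Affine.equation_iff]
  simp only [threeTorsionX, Finset.mem_insert, Finset.mem_singleton] at hx
  rcases hx with rfl | rfl | rfl | rfl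
  · exact ⟨w * T ^ 3 + w + 1, by simp only [fullThreeTorsionCurve]; grind⟩
  all_goals exact ⟨1, by simp only [fullThreeTorsionCurve]; grind⟩

lemma setOf_three_nsmul_eq_zero (hw : w ^ 2 + w + 1 = 0) (hT : T ^ 3 ≠ 1) :
    {P : (fullThreeTorsionCurve T).toAffine.Point | 3 • P = 0} =
      {P | ∀ x y (h : (fullThreeTorsionCurve T).toAffine.Nonsingular x y), P = .some x y h →
        x ∈ threeTorsionX w T} := by
  ext (_ | ⟨x, y, h⟩)
  · exact iff_of_true (nsmul_zero 3) fun _ _ _ h => nomatch h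
  have hmem : x ∈ threeTorsionX w T ↔ (fullThreeTorsionCurve T).Ψ₃.eval x = 0 := by
    simp [threeTorsionX, fullThreeTorsionCurve_Ψ₃_eval hw, sub_eq_zero, or_assoc]
  simp only [Set.mem_ofPred_eq, Affine.three_nsmul_some_eq_zero_iff, ← hmem]
  refine ⟨fun ⟨_, hx⟩ _ _ _ e => ?_, fun H => ⟨?_, H x y h rfl⟩⟩
  · cases e; exact hx
  · exact ne_negY_of_mem_threeTorsionX hw hT (H x y h rfl) y

theorem ncard_setOf_three_nsmul_eq_zero (hw : w ^ 2 + w + 1 = 0) (hT : T ^ 3 ≠ 1) :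
    {P : (fullThreeTorsionCurve T).toAffine.Point | 3 • P = 0}.ncard = 9 := by
  rw [setOf_three_nsmul_eq_zero hw hT, Affine.ncard_setOf_forall_X_mem, card_threeTorsionX hw hT]
  intro x hx
  obtain ⟨y, hy⟩ := exists_nonsingular_of_mem_threeTorsionX hw hT hx
  exact ⟨y, hy, ne_negY_of_mem_threeTorsionX hw hT hx y⟩

end FullThreeTorsion

lemma exists_sq_add_self_add_one_eq_zero {F : Type*} [Field F] [Fintype F]
    (h : 3 ∣ Fintype.card F - 1) : ∃ w : F, w ^ 2 + w + 1 = 0 := by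
  classical
  obtain ⟨ζ, hζ⟩ := exists_prime_orderOf_dvd_card (G := Fˣ) 3 (by rwa [Fintype.card_units])
  have hζ' : IsPrimitiveRoot (ζ : F) 3 := by
    rw [← hζ, IsPrimitiveRoot.coe_units_iff]
    exact IsPrimitiveRoot.orderOf ζ
  have hsum := hζ'.geom_sum_eq_zero (by norm_num)
  simp only [Finset.sum_range_succ, Finset.sum_range_zero] at hsum
  exact ⟨ζ, by linear_combination hsum⟩

lemma RatFunc.X_pow_ne_one {K : Type*} [Field K] {n : ℕ} (hn : n ≠ 0) :
    (RatFunc.X : RatFunc K) ^ n ≠ 1 :=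
  fun h => (RatFunc.transcendental_X.pow (Nat.pos_of_ne_zero hn)) (h ▸ isAlgebraic_one)

open Classical in
/-- Let `F_q` be a finite field whose cardinality is a power of `4` (so of characteristic `2`,
containing `F₄`), and let `K = F_q(T)`. Then all `3`-torsion points of the elliptic curve
`Y² + TXY + Y = X³ + T³ + 1` over `K` are `K`-rational: the set of `K`-rational points `P` with
`3 • P = 0` has exactly `9` elements. -/
theorem stmt19 {Fq : Type*} [Field Fq] [Fintype Fq] [CharP Fq 2]
    (hq : ∃ n : ℕ, Fintype.card Fq = 4 ^ n) :
    letI K := RatFunc Fq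
    letI T : K := RatFunc.X
    letI E : WeierstrassCurve K := ⟨T, 0, 1, 0, T ^ 3 + 1⟩
    {P : E.toAffine.Point | 3 • P = 0}.ncard = 9 := by
  obtain ⟨n, hn⟩ := hq
  obtain ⟨w, hw⟩ := exists_sq_add_self_add_one_eq_zero (F := Fq)
    (by simpa [hn] using Nat.sub_dvd_pow_sub_pow 4 1 n)
  exact ncard_setOf_three_nsmul_eq_zero (w := algebraMap Fq (RatFunc Fq) w)
    (by simpa using congr(algebraMap Fq (RatFunc Fq) $hw)) (RatFunc.X_pow_ne_one three_ne_zero)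
end
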